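/- arXiv:2503.16927 — 4 statements merged into one kernel-verified Lean document; each statement's English description precedes it below -/
import Mathlib

section
/- Let L : E → ℝ be twice continuously differentiable and fix τ ∈ ℝ. Then the look-ahead objective L_R^τ is differentiable at every θ ∈ E, and its gradient satisfies ∇L_R^τ(θ) = g′ − τ · H(θ)(g′), where g′ = ∇L(θ − τ∇L(θ)); i.e., ∇L_R^τ(θ) = (id − τH(θ)) ∇L(θ − τ∇L(θ)). -/
/-!
By the chain rule, the derivative of `θ ↦ L (θ - τ • ∇L θ)` is `⟪∇L θ', (1 - τ • H θ) ·⟫` with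
`θ' = θ - τ • ∇L θ`, so its gradient is `(1 - τ • H θ)† (∇L θ')`. The Hessian `H θ` is self-adjoint
by the symmetry of second derivatives of a `C²` function, hence so is `1 - τ • H θ`.
-/

open InnerProductSpace RealInnerProductSpace ContinuousLinearMap

theorem HasGradientAt.comp_hasFDerivAt {𝕜 E F : Type*} [RCLike 𝕜]
    [NormedAddCommGroup E] [InnerProductSpace 𝕜 E] [CompleteSpace E]
    [NormedAddCommGroup F] [InnerProductSpace 𝕜 F] [CompleteSpace F]
    {f : F → 𝕜} {g : F} {φ : E → F} {φ' : E →L[𝕜] F} {x : E}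
    (hf : HasGradientAt f g (φ x)) (hφ : HasFDerivAt φ φ' x) :
    HasGradientAt (f ∘ φ) (adjoint φ' g) x := by
  refine (hf.hasFDerivAt.comp x hφ).congr_fderiv ?_
  ext v
  simp [adjoint_inner_left]

section Hessian

variable {F : Type*} [NormedAddCommGroup F] [InnerProductSpace ℝ F] [CompleteSpace F]
  {f : F → ℝ} {x : F}

theorem DifferentiableAt.differentiableAt_gradient (hf : DifferentiableAt ℝ (fderiv ℝ f) x) :
    DifferentiableAt ℝ (gradient f) x :=
  (toDual ℝ F).symm.differentiableAt.comp x hf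

theorem inner_fderiv_gradient_apply (v w : F) :
    ⟪fderiv ℝ (gradient f) x v, w⟫ = fderiv ℝ (fderiv ℝ f) x v w := by
  have hgrad : gradient f = (toDual ℝ F).symm ∘ fderiv ℝ f := rfl
  rw [hgrad, LinearIsometryEquiv.comp_fderiv]
  exact toDual_symm_apply

theorem ContDiffAt.isSelfAdjoint_fderiv_gradient (hf : ContDiffAt ℝ 2 f x) :
    IsSelfAdjoint (fderiv ℝ (gradient f) x) := by
  refine isSelfAdjoint_iff_isSymmetric.2 fun v w => ?_
  calc ⟪fderiv ℝ (gradient f) x v, w⟫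
      = fderiv ℝ (fderiv ℝ f) x v w := inner_fderiv_gradient_apply v w
    _ = fderiv ℝ (fderiv ℝ f) x w v := (hf.isSymmSndFDerivAt (by simp)).eq v w
    _ = ⟪v, fderiv ℝ (gradient f) x w⟫ := by
      rw [real_inner_comm, inner_fderiv_gradient_apply]

end Hessian

/-- Let `L : E → ℝ` be twice continuously differentiable and fix `τ : ℝ`.
Then the look-ahead objective `L_R^τ : θ ↦ L (θ - τ • ∇L θ)` is differentiable at every `θ`,
with gradient `(id - τ H θ) (∇L (θ - τ • ∇L θ))`, where `H θ = fderiv ℝ (gradient L) θ`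
is the Hessian of `L` at `θ`. -/
theorem rankformer_gradient_formula
    {E : Type*} [NormedAddCommGroup E] [InnerProductSpace ℝ E] [FiniteDimensional ℝ E]
    (L : E → ℝ) (hL : ContDiff ℝ 2 L) (τ : ℝ) (θ : E) :
    HasGradientAt (fun θ' => L (θ' - τ • gradient L θ'))
      (gradient L (θ - τ • gradient L θ)
        - τ • (fderiv ℝ (gradient L) θ) (gradient L (θ - τ • gradient L θ))) θ := by
  have hHessian : HasFDerivAt (gradient L) (fderiv ℝ (gradient L) θ) θ :=
    ((hL.fderiv_right (m := 1) (by norm_num)).differentiable one_ne_zero θ)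
      |>.differentiableAt_gradient.hasFDerivAt
  have hStep : HasFDerivAt (fun θ' => θ' - τ • gradient L θ')
      (1 - τ • fderiv ℝ (gradient L) θ) θ :=
    (hasFDerivAt_id θ).sub (hHessian.const_smul τ)
  have hSelfAdjoint : IsSelfAdjoint (1 - τ • fderiv ℝ (gradient L) θ) :=
    (IsSelfAdjoint.one _).sub
      ((IsSelfAdjoint.all τ).smul hL.contDiffAt.isSelfAdjoint_fderiv_gradient)
  have hL' := (hL.differentiable two_ne_zero (θ - τ • gradient L θ)).hasGradientAt
  simpa [hSelfAdjoint.adjoint_eq, Function.comp_def] using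
    HasGradientAt.comp_hasFDerivAt (φ := fun θ' => θ' - τ • gradient L θ') hL' hStep
end

section
/- Fix θ ∈ E. Then, as τ → 0, the gradient of the look-ahead objective satisfies ∇L_R^τ(θ) = ∇L(θ) − 2τ · H(θ)(∇L(θ)) + O(τ²); that is, ‖∇L_R^τ(θ) − (id − 2τH(θ))(∇L(θ))‖ = O(τ²) as τ → 0. -/
/-!
By the chain rule and the symmetry of the Hessian `H`, the gradient of `θ' ↦ L (θ' - τ ∇L θ')`
at `θ` is `∇L y - τ H (∇L y)` with `y = θ - τ ∇L θ`. Since `H` is Lipschitz near `θ`, the first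
order expansion `∇L y = ∇L θ + H (y - θ) + O(‖y - θ‖²)` holds, and `‖y - θ‖ = O(τ)`; moreover
`τ H (∇L y - ∇L θ) = O(τ²)`. Collecting terms leaves `∇L θ - 2τ H (∇L θ) + O(τ²)`.
-/

open Asymptotics Filter RealInnerProductSpace Topology

section

variable {E : Type*} [NormedAddCommGroup E] [InnerProductSpace ℝ E] [CompleteSpace E]

theorem inner_fderiv_gradient_apply_s2 (L : E → ℝ) (θ v w : E) :
    ⟪fderiv ℝ (gradient L) θ v, w⟫ = fderiv ℝ (fderiv ℝ L) θ v w := by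
  have hgrad : gradient L = (InnerProductSpace.toDual ℝ E).symm ∘ fderiv ℝ L := rfl
  rw [hgrad, LinearIsometryEquiv.comp_fderiv]
  exact InnerProductSpace.toDual_symm_apply

theorem ContDiffAt.isSymmetric_fderiv_gradient {L : E → ℝ} {θ : E} (hL : ContDiffAt ℝ 2 L θ) :
    (fderiv ℝ (gradient L) θ : E →ₗ[ℝ] E).IsSymmetric := fun v w => by
  rw [ContinuousLinearMap.coe_coe, inner_fderiv_gradient_apply_s2, real_inner_comm,
    inner_fderiv_gradient_apply_s2]
  exact hL.isSymmSndFDerivAt (by simp) v w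

theorem ContDiff.contDiff_gradient {L : E → ℝ} {n : WithTop ℕ∞} (hL : ContDiff ℝ (n + 1) L) :
    ContDiff ℝ n (gradient L) :=
  (InnerProductSpace.toDual ℝ E).symm.contDiff.comp (hL.fderiv_right le_rfl)

theorem hasGradientAt_comp_sub_smul {L : E → ℝ} {g : E → E} {H : E →L[ℝ] E} {θ : E} (τ : ℝ)
    (hL : DifferentiableAt ℝ L (θ - τ • g θ)) (hg : HasFDerivAt g H θ)
    (hH : (H : E →ₗ[ℝ] E).IsSymmetric) :
    HasGradientAt (fun θ' => L (θ' - τ • g θ'))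
      (gradient L (θ - τ • g θ) - τ • H (gradient L (θ - τ • g θ))) θ := by
  rw [hasGradientAt_iff_hasFDerivAt]
  refine (hL.hasGradientAt.hasFDerivAt.comp θ
    ((hasFDerivAt_id θ).sub (hg.const_smul τ))).congr_fderiv ?_
  ext v
  simp only [ContinuousLinearMap.comp_apply, sub_apply, smul_apply, ContinuousLinearMap.id_apply,
    InnerProductSpace.toDual_apply_apply, inner_sub_left, inner_sub_right, real_inner_smul_left,
    real_inner_smul_right]
  rw [← ContinuousLinearMap.coe_coe H, hH]

end

theorem isBigO_sub_sub_fderiv_of_lipschitzOnWith {E F : Type*} [NormedAddCommGroup E]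
    [NormedSpace ℝ E] [NormedAddCommGroup F] [NormedSpace ℝ F] {f : E → F} {x : E} {K : NNReal}
    {s : Set E} (hs : s ∈ 𝓝 x) (hf : ∀ y ∈ s, DifferentiableAt ℝ f y)
    (hK : LipschitzOnWith K (fderiv ℝ f) s) :
    (fun y => f y - f x - fderiv ℝ f x (y - x)) =O[𝓝 x] fun y => ‖y - x‖ ^ 2 := by
  obtain ⟨ε, hε, hεs⟩ := Metric.nhds_basis_closedBall.mem_iff.mp hs
  refine IsBigO.of_bound K ?_
  filter_upwards [Metric.closedBall_mem_nhds x hε] with y hy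
  have hB : Metric.closedBall x ‖y - x‖ ⊆ s :=
    (Metric.closedBall_subset_closedBall (by rwa [← dist_eq_norm])).trans hεs
  have hbound : ∀ z ∈ Metric.closedBall x ‖y - x‖, ‖fderiv ℝ f z - fderiv ℝ f x‖ ≤ K * ‖y - x‖ :=
    fun z hz => by
      rw [← dist_eq_norm]
      calc dist (fderiv ℝ f z) (fderiv ℝ f x) ≤ K * dist z x :=
            hK.dist_le_mul z (hB hz) x (hB (Metric.mem_closedBall_self (norm_nonneg _)))
        _ ≤ K * ‖y - x‖ := by gcongr; exact hz
  calc ‖f y - f x - fderiv ℝ f x (y - x)‖ ≤ K * ‖y - x‖ * ‖y - x‖ :=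
        (convex_closedBall x _).norm_image_sub_le_of_norm_fderiv_le' (fun z hz => hf z (hB hz))
          hbound (Metric.mem_closedBall_self (norm_nonneg _)) (by simp [dist_eq_norm])
    _ = K * ‖‖y - x‖ ^ 2‖ := by rw [norm_pow, norm_norm]; ring

/-- Fix `θ : E`. If `L` is `C²` and its second derivative (represented as
`θ' ↦ fderiv ℝ (gradient L) θ'`, the Hessian) is Lipschitz on a neighborhood of `θ`, then the
gradient of the look-ahead objective `L_R^τ : θ' ↦ L (θ' - τ • ∇L θ')` satisfies
`∇L_R^τ (θ) = (id - 2τ H θ) (∇L θ) + O(τ²)` as `τ → 0`. -/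
theorem lookahead_objective_gradient_taylor
    {E : Type*} [NormedAddCommGroup E] [InnerProductSpace ℝ E] [FiniteDimensional ℝ E]
    (L : E → ℝ) (hL : ContDiff ℝ 2 L) (θ : E)
    (hLip : ∃ K : NNReal, ∃ s ∈ nhds θ,
      LipschitzOnWith K (fun θ' => fderiv ℝ (gradient L) θ') s) :
    (fun τ : ℝ => gradient (fun θ' => L (θ' - τ • gradient L θ')) θ
        - (gradient L θ - (2 * τ) • (fderiv ℝ (gradient L) θ) (gradient L θ)))
      =O[nhds 0] (fun τ : ℝ => τ ^ 2) := by
  obtain ⟨K, s, hs, hK⟩ := hLip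
  set g := gradient L
  set H := fderiv ℝ g θ
  have hg : Differentiable ℝ g := (hL.contDiff_gradient (n := 1)).differentiable one_ne_zero
  set y : ℝ → E := fun τ => θ - τ • g θ
  have hy : Tendsto y (𝓝 0) (𝓝 θ) :=
    (show Continuous y by fun_prop).tendsto' 0 θ (by simp [y])
  have hyθ : (fun τ => y τ - θ) =O[𝓝 0] fun τ => τ :=
    IsBigO.of_bound ‖g θ‖ (Eventually.of_forall fun τ => by simp [y, norm_smul, mul_comm])
  have hremainder : (fun τ => g (y τ) - g θ - H (y τ - θ)) =O[𝓝 0] fun τ => τ ^ 2 :=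
    ((isBigO_sub_sub_fderiv_of_lipschitzOnWith hs (fun z _ => hg z) hK).comp_tendsto hy).trans
      (hyθ.norm_left.pow 2)
  have hcorrection : (fun τ => τ • H (g (y τ) - g θ)) =O[𝓝 0] fun τ => τ ^ 2 := by
    simpa [sq] using (isBigO_refl (fun τ : ℝ => τ) _).smul
      ((H.isBigO_comp _ _).trans (((hg θ).isBigO_sub.comp_tendsto hy).trans hyθ))
  refine (hremainder.sub hcorrection).congr_left fun τ => ?_
  rw [(hasGradientAt_comp_sub_smul τ (hL.differentiable (by norm_num) _) (hg θ).hasFDerivAt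
    (hL.contDiffAt.isSymmetric_fderiv_gradient)).gradient]
  simp only [y, sub_sub_cancel_left, map_neg, map_smul, map_sub, two_mul, add_smul, smul_sub]
  abel
end

section
/- Assume the embeddings are normalized, ‖z_u‖ = 1 and ‖z_j‖ = 1 for all j ∈ I, and that α ≥ 2. Then the Rankformer attention weights have fixed signs: Ω⁺_i ≥ 0 for every i ∈ I and Ω⁻_i ≤ 0 for every i ∈ I. -/
open Finset InnerProductSpace

/-- If all embeddings are normalized (`‖z_u‖ = 1` and `‖z_j‖ = 1` for `j ∈ I`)
and `α ≥ 2`, then the Rankformer attention weights have fixed signs: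
`Ω⁺_i ≥ 0` and `Ω⁻_i ≤ 0` for every `i ∈ I`. -/
theorem attention_weights_fixed_sign
    {E : Type*} [NormedAddCommGroup E] [InnerProductSpace ℝ E]
    {ι : Type*} [DecidableEq ι] (I Np : Finset ι) (hsub : Np ⊆ I)
    (m d : ℕ) (hm : I.card = m) (hdc : Np.card = d) (hd0 : 0 < d) (hdm : d < m)
    (zu : E) (z : ι → E) (α : ℝ)
    (bpos : ℝ) (hbpos : bpos = (1 / (d : ℝ)) * ∑ j ∈ Np, ⟪zu, z j⟫_ℝ)
    (bneg : ℝ) (hbneg : bneg = (1 / ((m : ℝ) - d)) * ∑ j ∈ I \ Np, ⟪zu, z j⟫_ℝ)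
    (Ωpos : ι → ℝ) (hΩpos : ∀ i, Ωpos i = (⟪zu, z i⟫_ℝ - bneg + α) / d)
    (Ωneg : ι → ℝ) (hΩneg : ∀ i, Ωneg i = (⟪zu, z i⟫_ℝ - bpos - α) / ((m : ℝ) - d))
    (hzu : ‖zu‖ = 1) (hz : ∀ j ∈ I, ‖z j‖ = 1) (hα : 2 ≤ α) :
    (∀ i ∈ I, 0 ≤ Ωpos i) ∧ (∀ i ∈ I, Ωneg i ≤ 0) := by
  have hinner : ∀ j ∈ I, |⟪zu, z j⟫_ℝ| ≤ 1 := by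
    intro j hj
    calc |⟪zu, z j⟫_ℝ| ≤ ‖zu‖ * ‖z j‖ := abs_real_inner_le_norm _ _
    _ = 1 := by rw [hzu, hz j hj]; ring
  have hdpos : (0:ℝ) < d := by exact_mod_cast hd0
  have hmd : (0:ℝ) < (m:ℝ) - d := by
    have : (d:ℝ) < m := by exact_mod_cast hdm
    linarith
  have hbp : |bpos| ≤ 1 := by
    rw [hbpos, abs_mul, abs_of_pos (by positivity : (0:ℝ) < 1/(d:ℝ))]
    have h1 : |∑ j ∈ Np, ⟪zu, z j⟫_ℝ| ≤ (d:ℝ) := by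
      calc |∑ j ∈ Np, ⟪zu, z j⟫_ℝ| ≤ ∑ j ∈ Np, |⟪zu, z j⟫_ℝ| :=
            Finset.abs_sum_le_sum_abs _ _
      _ ≤ ∑ j ∈ Np, 1 := Finset.sum_le_sum fun j hj => hinner j (hsub hj)
      _ = (d:ℝ) := by simp [hdc]
    calc 1/(d:ℝ) * |∑ j ∈ Np, ⟪zu, z j⟫_ℝ| ≤ 1/(d:ℝ) * d := by
          apply mul_le_mul_of_nonneg_left h1; positivity
    _ = 1 := by field_simp
  have hbn : |bneg| ≤ 1 := by
    rw [hbneg, abs_mul, abs_of_pos (by positivity : (0:ℝ) < 1/((m:ℝ)-d))]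
    have hcard : ((I \ Np).card : ℝ) = (m:ℝ) - d := by
      rw [Finset.card_sdiff_of_subset hsub, hm, hdc]
      have := Nat.le_of_lt hdm
      push_cast [Nat.cast_sub this]
      ring
    have h1 : |∑ j ∈ I \ Np, ⟪zu, z j⟫_ℝ| ≤ (m:ℝ) - d := by
      calc |∑ j ∈ I \ Np, ⟪zu, z j⟫_ℝ| ≤ ∑ j ∈ I \ Np, |⟪zu, z j⟫_ℝ| :=
            Finset.abs_sum_le_sum_abs _ _
      _ ≤ ∑ j ∈ I \ Np, 1 := Finset.sum_le_sum fun j hj =>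
            hinner j (Finset.mem_sdiff.mp hj).1
      _ = (m:ℝ) - d := by simpa using hcard
    calc 1/((m:ℝ)-d) * |∑ j ∈ I \ Np, ⟪zu, z j⟫_ℝ| ≤ 1/((m:ℝ)-d) * ((m:ℝ)-d) := by
          apply mul_le_mul_of_nonneg_left h1; positivity
    _ = 1 := by field_simp
  rw [abs_le] at hbp hbn
  constructor
  · intro i hi
    rw [hΩpos]
    have := abs_le.mp (hinner i hi)
    apply div_nonneg _ (le_of_lt hdpos)
    linarith
  · intro i hi
    rw [hΩneg]
    have := abs_le.mp (hinner i hi)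
    apply div_nonpos_of_nonpos_of_nonneg _ (le_of_lt hmd)
    linarith
end

section
/- Assume the embeddings are normalized, ‖z_u‖ = 1 and ‖z_j‖ = 1 for all j ∈ I, and that α ≥ 2. Then the Rankformer normalization constant admits the closed form ∑_{i∈N⁺} |Ω⁺_i| = b⁺ − b⁻ + α and ∑_{i∈N⁻} |Ω⁻_i| = b⁺ − b⁻ + α, and hence C_u := ∑_{i∈N⁺} |Ω⁺_i| + ∑_{i∈N⁻} |Ω⁻_i| = 2(b⁺ − b⁻ + α). -/
open Finset InnerProductSpace

/-- If all embeddings are normalized (`‖z_u‖ = 1` and `‖z_j‖ = 1` for `j ∈ I`)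
and `α ≥ 2`, then the Rankformer normalization constant admits the closed form
`∑_{i∈N⁺} |Ω⁺_i| = b⁺ − b⁻ + α`, `∑_{i∈N⁻} |Ω⁻_i| = b⁺ − b⁻ + α`, hence
`C_u = ∑_{i∈N⁺} |Ω⁺_i| + ∑_{i∈N⁻} |Ω⁻_i| = 2(b⁺ − b⁻ + α)`. -/
theorem normalization_constant_closed_form
    {E : Type*} [NormedAddCommGroup E] [InnerProductSpace ℝ E]
    {ι : Type*} [DecidableEq ι] (I Np : Finset ι) (hsub : Np ⊆ I)
    (m d : ℕ) (hm : I.card = m) (hdc : Np.card = d) (hd0 : 0 < d) (hdm : d < m)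
    (zu : E) (z : ι → E) (α : ℝ)
    (bpos : ℝ) (hbpos : bpos = (1 / (d : ℝ)) * ∑ j ∈ Np, ⟪zu, z j⟫_ℝ)
    (bneg : ℝ) (hbneg : bneg = (1 / ((m : ℝ) - d)) * ∑ j ∈ I \ Np, ⟪zu, z j⟫_ℝ)
    (Ωpos : ι → ℝ) (hΩpos : ∀ i, Ωpos i = (⟪zu, z i⟫_ℝ - bneg + α) / d)
    (Ωneg : ι → ℝ) (hΩneg : ∀ i, Ωneg i = (⟪zu, z i⟫_ℝ - bpos - α) / ((m : ℝ) - d))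
    (hzu : ‖zu‖ = 1) (hz : ∀ j ∈ I, ‖z j‖ = 1) (hα : 2 ≤ α) :
    (∑ i ∈ Np, |Ωpos i| = bpos - bneg + α)
    ∧ (∑ i ∈ I \ Np, |Ωneg i| = bpos - bneg + α)
    ∧ (∑ i ∈ Np, |Ωpos i|) + (∑ i ∈ I \ Np, |Ωneg i|) = 2 * (bpos - bneg + α) := by
  have hdpos : (0:ℝ) < d := by exact_mod_cast hd0
  have hmd : (0:ℝ) < (m:ℝ) - d := by
    have : (d:ℝ) < m := by exact_mod_cast hdm
    linarith
  have hcardneg : (I \ Np).card = m - d := by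
    rw [card_sdiff_of_subset hsub, hm, hdc]
  have hcardnegR : ((I \ Np).card : ℝ) = (m:ℝ) - d := by
    rw [hcardneg]; push_cast [Nat.cast_sub hdm.le]; ring
  have hinner : ∀ j ∈ I, |⟪zu, z j⟫_ℝ| ≤ 1 := by
    intro j hj
    calc |⟪zu, z j⟫_ℝ| ≤ ‖zu‖ * ‖z j‖ := abs_real_inner_le_norm zu (z j)
    _ = 1 := by rw [hzu, hz j hj]; ring
  have hbposle : |bpos| ≤ 1 := by
    rw [hbpos, abs_mul, abs_div, abs_one]
    have h1 : |∑ j ∈ Np, ⟪zu, z j⟫_ℝ| ≤ (d:ℝ) := by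
      calc |∑ j ∈ Np, ⟪zu, z j⟫_ℝ| ≤ ∑ j ∈ Np, |⟪zu, z j⟫_ℝ| := abs_sum_le_sum_abs _ _
      _ ≤ ∑ j ∈ Np, 1 := Finset.sum_le_sum (fun j hj => hinner j (hsub hj))
      _ = (d:ℝ) := by rw [Finset.sum_const, hdc]; simp
    rw [abs_of_pos hdpos, div_mul_eq_mul_div, div_le_one hdpos, one_mul]
    exact h1
  have hbnegle : |bneg| ≤ 1 := by
    rw [hbneg, abs_mul, abs_div, abs_one]
    have h1 : |∑ j ∈ I \ Np, ⟪zu, z j⟫_ℝ| ≤ (m:ℝ) - d := by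
      calc |∑ j ∈ I \ Np, ⟪zu, z j⟫_ℝ| ≤ ∑ j ∈ I \ Np, |⟪zu, z j⟫_ℝ| := abs_sum_le_sum_abs _ _
      _ ≤ ∑ j ∈ I \ Np, 1 := Finset.sum_le_sum (fun j hj => hinner j (Finset.mem_sdiff.mp hj).1)
      _ = (m:ℝ) - d := by rw [Finset.sum_const]; simp [hcardnegR]
    rw [abs_of_pos hmd, div_mul_eq_mul_div, div_le_one hmd, one_mul]
    exact h1
  have hp : ∑ i ∈ Np, |Ωpos i| = bpos - bneg + α := by
    have hnn : ∀ i ∈ Np, 0 ≤ Ωpos i := by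
      intro i hi
      rw [hΩpos i]
      apply div_nonneg _ hdpos.le
      have h1 := (abs_le.mp (hinner i (hsub hi))).1
      have h2 := (abs_le.mp hbnegle).2
      linarith
    calc ∑ i ∈ Np, |Ωpos i| = ∑ i ∈ Np, Ωpos i := Finset.sum_congr rfl (fun i hi => abs_of_nonneg (hnn i hi))
    _ = ∑ i ∈ Np, (⟪zu, z i⟫_ℝ - bneg + α) / d := Finset.sum_congr rfl (fun i _ => hΩpos i)
    _ = ((∑ i ∈ Np, ⟪zu, z i⟫_ℝ) + (d:ℝ) * (α - bneg)) / d := by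
        rw [← Finset.sum_div]
        congr 1
        rw [Finset.sum_add_distrib, Finset.sum_sub_distrib, Finset.sum_const, Finset.sum_const, hdc]
        simp; ring
    _ = bpos - bneg + α := by
        rw [hbpos]; field_simp; ring
  have hn : ∑ i ∈ I \ Np, |Ωneg i| = bpos - bneg + α := by
    have hnp : ∀ i ∈ I \ Np, Ωneg i ≤ 0 := by
      intro i hi
      rw [hΩneg i]
      apply div_nonpos_of_nonpos_of_nonneg _ hmd.le
      have h1 := (abs_le.mp (hinner i (Finset.mem_sdiff.mp hi).1)).2
      have h2 := (abs_le.mp hbposle).1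
      linarith
    calc ∑ i ∈ I \ Np, |Ωneg i| = ∑ i ∈ I \ Np, -Ωneg i := Finset.sum_congr rfl (fun i hi => abs_of_nonpos (hnp i hi))
    _ = ∑ i ∈ I \ Np, -((⟪zu, z i⟫_ℝ - bpos - α) / ((m:ℝ) - d)) := Finset.sum_congr rfl (fun i _ => by rw [hΩneg i])
    _ = (-(∑ i ∈ I \ Np, ⟪zu, z i⟫_ℝ) + ((m:ℝ) - d) * (bpos + α)) / ((m:ℝ) - d) := by
        simp only [neg_div, Finset.sum_neg_distrib, ← Finset.sum_div]
        simp only [Finset.sum_sub_distrib, Finset.sum_const, nsmul_eq_mul, hcardnegR]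
        field_simp
        ring
    _ = bpos - bneg + α := by
        rw [hbneg]; field_simp; ring
  exact ⟨hp, hn, by rw [hp, hn]; ring⟩
end
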